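/- Let A and B be real n×n matrices such that the product A·B is symmetric and B is symmetric positive definite. Then every eigenvalue of A (an element of the spectrum of A viewed as a complex matrix) is a positive real number if and only if A·B is positive definite; likewise, every eigenvalue of A is a negative real number if and only if A·B is negative definite. -/

import Mathlib

/-!
Write `B = S * S` with `S = √B` symmetric and invertible, and put `M = S⁻¹ (A B) S⁻¹`, which is
symmetric because `A B` is. Then `A = S M S⁻¹` is similar to `M`, so the eigenvalues of `A` are
the (real) eigenvalues of `M`, while `A B = S M S` is congruent to `M`, so `A B` is positive
definite exactly when `M` is, i.e. when all eigenvalues of `M` are positive. The negative case is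
the positive one applied to `-A`.
-/

open Matrix

/-- A real symmetric matrix is positive definite: `vᵀPv > 0` for all nonzero `v`. -/
def Matrix.IsPD {n : ℕ} (P : Matrix (Fin n) (Fin n) ℝ) : Prop :=
  Pᵀ = P ∧ ∀ v : Fin n → ℝ, v ≠ 0 → 0 < v ⬝ᵥ (P *ᵥ v)

/-- A real symmetric matrix is negative definite: `vᵀPv < 0` for all nonzero `v`. -/
def Matrix.IsND {n : ℕ} (P : Matrix (Fin n) (Fin n) ℝ) : Prop :=
  Pᵀ = P ∧ ∀ v : Fin n → ℝ, v ≠ 0 → v ⬝ᵥ (P *ᵥ v) < 0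

namespace Matrix

variable {ι : Type*} [Fintype ι] [DecidableEq ι]

theorem IsHermitian.spectrum_map_ofReal {M : Matrix ι ι ℝ} (hM : M.IsHermitian) :
    spectrum ℂ (M.map Complex.ofReal) = Complex.ofReal '' Set.range hM.eigenvalues := by
  ext μ
  rw [mem_spectrum_iff_isRoot_charpoly]
  change (M.map Complex.ofRealHom).charpoly.IsRoot μ ↔ _
  rw [charpoly_map, hM.charpoly_eq, Polynomial.map_prod]
  simp [Polynomial.eval_prod, Finset.prod_eq_zero_iff, sub_eq_zero, eq_comm (a := μ)]

theorem IsHermitian.posDef_iff_forall_mem_spectrum_map_ofReal {M : Matrix ι ι ℝ}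
    (hM : M.IsHermitian) :
    M.PosDef ↔ ∀ μ ∈ spectrum ℂ (M.map Complex.ofReal), μ.im = 0 ∧ 0 < μ.re := by
  simp [hM.spectrum_map_ofReal, hM.posDef_iff_eigenvalues_pos]

theorem spectrum_map_ofReal_conj {U : Matrix ι ι ℝ} (hU : IsUnit U) (M : Matrix ι ι ℝ) :
    spectrum ℂ ((U * M * U⁻¹).map Complex.ofReal) = spectrum ℂ (M.map Complex.ofReal) := by
  lift U to (Matrix ι ι ℝ)ˣ using hU
  have hconj := spectrum.units_conjugate (R := ℂ) (a := M.map Complex.ofReal)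
    (u := Units.map (Complex.ofRealHom.mapMatrix (m := ι)).toMonoidHom U)
  rw [← coe_units_inv]
  convert hconj using 2
  change Complex.ofRealHom.mapMatrix (_ * _ * _) = _
  rw [map_mul, map_mul]
  rfl

theorem PosDef.exists_isUnit_isHermitian_mul_self {B : Matrix ι ι ℝ} (hB : B.PosDef) :
    ∃ S : Matrix ι ι ℝ, IsUnit S ∧ S.IsHermitian ∧ S * S = B := by
  open scoped MatrixOrder in
  exact ⟨CFC.sqrt B, hB.isStrictlyPositive.isUnit_cfcSqrt,
    (CFC.sqrt_nonneg B).posSemidef.isHermitian, CFC.sqrt_mul_sqrt_self B hB.posSemidef.nonneg⟩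

theorem forall_mem_spectrum_map_ofReal_pos_iff_posDef_mul {A B : Matrix ι ι ℝ}
    (hAB : (A * B).IsHermitian) (hB : B.PosDef) :
    (∀ μ ∈ spectrum ℂ (A.map Complex.ofReal), μ.im = 0 ∧ 0 < μ.re) ↔ (A * B).PosDef := by
  obtain ⟨S, hSu, hS, rfl⟩ := hB.exists_isUnit_isHermitian_mul_self
  have hSd : IsUnit S.det := (isUnit_iff_isUnit_det S).mp hSu
  set M := S⁻¹ * (A * (S * S)) * S⁻¹
  have hA : A = S * M * S⁻¹ := by
    simp only [M, mul_assoc, mul_nonsing_inv_cancel_left (h := hSd), mul_nonsing_inv _ hSd,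
      mul_one]
  have hAB_eq : A * (S * S) = S * M * star S := by
    simp only [M, mul_assoc, star_eq_conjTranspose, hS.eq, mul_nonsing_inv_cancel_left (h := hSd),
      nonsing_inv_mul _ hSd, mul_one]
  have hM : M.IsHermitian := by
    simpa only [hS.inv.eq] using isHermitian_conjTranspose_mul_mul S⁻¹ hAB
  rw [hAB_eq, IsUnit.posDef_star_right_conjugate_iff hSu,
    hM.posDef_iff_forall_mem_spectrum_map_ofReal, hA, spectrum_map_ofReal_conj hSu]

theorem forall_mem_spectrum_map_ofReal_neg_iff_posDef_neg_mul {A B : Matrix ι ι ℝ}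
    (hAB : (A * B).IsHermitian) (hB : B.PosDef) :
    (∀ μ ∈ spectrum ℂ (A.map Complex.ofReal), μ.im = 0 ∧ μ.re < 0) ↔ (-(A * B)).PosDef := by
  have hnegAB : (-A * B).IsHermitian := by rw [neg_mul]; exact hAB.neg
  rw [← neg_mul, ← forall_mem_spectrum_map_ofReal_pos_iff_posDef_mul hnegAB hB,
    Matrix.map_neg _ Complex.ofReal_neg, ← spectrum.neg_eq]
  simp

theorem isPD_iff_posDef {n : ℕ} (P : Matrix (Fin n) (Fin n) ℝ) : P.IsPD ↔ P.PosDef := by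
  simp [IsPD, posDef_iff_dotProduct_mulVec, IsSymm]

theorem isND_iff_posDef_neg {n : ℕ} (P : Matrix (Fin n) (Fin n) ℝ) :
    P.IsND ↔ (-P).PosDef := by
  simp [IsND, posDef_iff_dotProduct_mulVec, IsSymm, neg_mulVec, dotProduct_neg]

end Matrix

theorem stmt_1 {n : ℕ} (A B : Matrix (Fin n) (Fin n) ℝ)
    (hAB : (A * B)ᵀ = A * B) (hB : B.IsPD) :
    ((∀ μ ∈ spectrum ℂ (A.map Complex.ofReal), μ.im = 0 ∧ 0 < μ.re) ↔ (A * B).IsPD) ∧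
    ((∀ μ ∈ spectrum ℂ (A.map Complex.ofReal), μ.im = 0 ∧ μ.re < 0) ↔ (A * B).IsND) := by
  have hAB' : (A * B).IsHermitian := isHermitian_iff_isSymm.mpr hAB
  rw [isPD_iff_posDef] at hB
  rw [isPD_iff_posDef, isND_iff_posDef_neg]
  exact ⟨forall_mem_spectrum_map_ofReal_pos_iff_posDef_mul hAB' hB,
    forall_mem_spectrum_map_ofReal_neg_iff_posDef_neg_mul hAB' hB⟩
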